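/- Let α be an extended class 𝒦 function and let q : [t₀, ∞) → ℝ be continuous and bounded with q(t) → 0 as t → ∞. Then every solution m : [t₀, ∞) → ℝ of the perturbed scalar system ṁ(t) = −α(m(t)) + q(t) is bounded on [t₀, ∞), and moreover m(t) → 0 as t → ∞. -/

import Mathlib

/-!
Once `|q| < α (ε / 2) / 2`, the right-hand side `-α (m) + q` is at most `-α (ε / 2) / 2` wherever
`m ≥ ε / 2`, so `m` drops below `ε / 2` in finite time and can never cross that level again.
Applied to `-m`, which solves the same kind of equation for `x ↦ -α (-x)` and `-q`, this gives the
lower bound. Boundedness follows from convergence and continuity on compact intervals.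
-/

open Set Filter Topology

theorem le_of_hasDerivAt_neg_at_level {f f' : ℝ → ℝ} {u c : ℝ}
    (hf : ∀ t ≥ u, HasDerivAt f (f' t) t) (hd : ∀ t ≥ u, f t = c → f' t < 0) (hu : f u ≤ c) :
    ∀ t ≥ u, f t ≤ c := fun _ ht ↦
  image_le_of_deriv_right_lt_deriv_boundary' (B := fun _ ↦ c) (B' := 0)
    (fun x hx ↦ (hf x hx.1).continuousAt.continuousWithinAt)
    (fun x hx ↦ (hf x hx.1).hasDerivWithinAt) hu continuousOn_const
    (fun x _ ↦ (hasDerivAt_const x c).hasDerivWithinAt) (fun x hx ↦ hd x hx.1)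
    (right_mem_Icc.2 ht)

theorem exists_le_of_hasDerivAt_le_neg {f f' : ℝ → ℝ} {T c k : ℝ} (hk : 0 < k)
    (hf : ∀ t ≥ T, HasDerivAt f (f' t) t) (hd : ∀ t ≥ T, c ≤ f t → f' t ≤ -k) :
    ∃ u ≥ T, f u ≤ c := by
  by_contra! hgt
  -- the time at which the line `f T - k (t - T)` reaches `c`
  set t₁ := T + (f T - c) / k
  have hTt₁ : T ≤ t₁ := le_add_of_nonneg_right (div_nonneg (sub_nonneg.2 (hgt T le_rfl).le) hk.le)
  have hdecay : f t₁ ≤ f T - k * (t₁ - T) :=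
    image_le_of_deriv_right_le_deriv_boundary (B := fun t ↦ f T - k * (t - T)) (B' := fun _ ↦ -k)
      (fun x hx ↦ (hf x hx.1).continuousAt.continuousWithinAt)
      (fun x hx ↦ (hf x hx.1).hasDerivWithinAt) (by simp) (by fun_prop)
      (fun x _ ↦ by
        simpa using (((hasDerivAt_id x).sub_const T).const_mul k |>.const_sub (f T)).hasDerivWithinAt)
      (fun x hx ↦ hd x hx.1 (hgt x hx.1).le) (right_mem_Icc.2 hTt₁)
  have hdrop : k * (t₁ - T) = f T - c := by simp only [t₁, add_sub_cancel_left]; field_simp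
  linarith [hgt t₁ hTt₁]

theorem eventually_le_of_hasDerivAt_le_neg {f f' : ℝ → ℝ} {c k : ℝ} (hk : 0 < k)
    (hf : ∀ᶠ t in atTop, HasDerivAt f (f' t) t) (hd : ∀ᶠ t in atTop, c ≤ f t → f' t ≤ -k) :
    ∀ᶠ t in atTop, f t ≤ c := by
  obtain ⟨T, hT⟩ := eventually_atTop.1 (hf.and hd)
  obtain ⟨u, hTu, hu⟩ := exists_le_of_hasDerivAt_le_neg hk (fun t ht ↦ (hT t ht).1)
    (fun t ht ↦ (hT t ht).2)
  refine eventually_atTop.2 ⟨u, le_of_hasDerivAt_neg_at_level (fun t ht ↦ (hT t (hTu.trans ht)).1)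
    (fun t ht heq ↦ ?_) hu⟩
  linarith [(hT t (hTu.trans ht)).2 heq.ge]

theorem eventually_lt_of_hasDerivAt_neg_strictMono_add {α q m : ℝ → ℝ} (hα : StrictMono α)
    (hα0 : α 0 = 0) (hq : Tendsto q atTop (𝓝 0))
    (hm : ∀ᶠ t in atTop, HasDerivAt m (-α (m t) + q t) t) {ε : ℝ} (hε : 0 < ε) :
    ∀ᶠ t in atTop, m t < ε := by
  have hk : 0 < α (ε / 2) := hα0 ▸ hα (half_pos hε)
  have hq_small : ∀ᶠ t in atTop, q t < α (ε / 2) / 2 := hq.eventually (gt_mem_nhds (half_pos hk))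
  have hle : ∀ᶠ t in atTop, m t ≤ ε / 2 :=
    eventually_le_of_hasDerivAt_le_neg (half_pos hk) hm <| hq_small.mono fun t ht hmt ↦ by
      linarith [hα.monotone hmt]
  exact hle.mono fun t ht ↦ ht.trans_lt (half_lt_self hε)

theorem tendsto_zero_of_hasDerivAt_neg_strictMono_add {α q m : ℝ → ℝ} (hα : StrictMono α)
    (hα0 : α 0 = 0) (hq : Tendsto q atTop (𝓝 0))
    (hm : ∀ᶠ t in atTop, HasDerivAt m (-α (m t) + q t) t) :
    Tendsto m atTop (𝓝 0) := by
  refine tendsto_order.2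
    ⟨fun a ha ↦ ?_, fun b hb ↦ eventually_lt_of_hasDerivAt_neg_strictMono_add hα hα0 hq hm hb⟩
  have hreflected := eventually_lt_of_hasDerivAt_neg_strictMono_add (α := fun x ↦ -α (-x))
    (fun x y h ↦ neg_lt_neg (hα (neg_lt_neg h))) (by simp [hα0])
    (q := fun t ↦ -q t) (by simpa using hq.neg)
    (m := -m) (hm.mono fun t h ↦ by simpa [add_comm] using h.neg) (neg_pos.2 ha)
  exact hreflected.mono fun t ht ↦ by simpa using ht

theorem exists_norm_le_of_continuousOn_Ici_of_tendsto {E : Type*} [SeminormedAddCommGroup E]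
    {f : ℝ → E} {t₀ : ℝ} {l : E} (hf : ContinuousOn f (Ici t₀)) (hl : Tendsto f atTop (𝓝 l)) :
    ∃ M, ∀ t ∈ Ici t₀, ‖f t‖ ≤ M := by
  obtain ⟨T, hT⟩ := eventually_atTop.1 (hl.norm.eventually (gt_mem_nhds (lt_add_one ‖l‖)))
  obtain ⟨C, hC⟩ := (isCompact_Icc (a := t₀) (b := T)).exists_bound_of_continuousOn
    (hf.mono Icc_subset_Ici_self)
  refine ⟨max C (‖l‖ + 1), fun t ht ↦ ?_⟩
  rcases le_total t T with h | h
  · exact (hC t ⟨ht, h⟩).trans (le_max_left _ _)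
  · exact (hT t h).le.trans (le_max_right _ _)

theorem scalar_classK_perturbed_decay_general (t₀ : ℝ) (α : ℝ → ℝ)
    (hα_mono : StrictMono α) (hα0 : α 0 = 0)
    (q : ℝ → ℝ)
    (hq_lim : Filter.Tendsto q Filter.atTop (nhds 0))
    (m : ℝ → ℝ)
    (hm : ∀ t ∈ Set.Ici t₀, HasDerivAt m (-α (m t) + q t) t) :
    (∃ M : ℝ, ∀ t ∈ Set.Ici t₀, |m t| ≤ M) ∧
    Filter.Tendsto m Filter.atTop (nhds 0) := by
  have hlim := tendsto_zero_of_hasDerivAt_neg_strictMono_add hα_mono hα0 hq_lim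
    (eventually_atTop.2 ⟨t₀, hm⟩)
  exact ⟨exists_norm_le_of_continuousOn_Ici_of_tendsto
    (fun t ht ↦ (hm t ht).continuousAt.continuousWithinAt) hlim, hlim⟩

/-- for the perturbed scalar system `ṁ = −α(m) + q(t)` with `α`
an extended class 𝒦 function and `q` continuous, bounded and vanishing at
infinity, every solution on `[t₀,∞)` is bounded and converges to `0`. -/
theorem scalar_classK_perturbed_decay (t₀ : ℝ) (α : ℝ → ℝ)
    (hα_cont : Continuous α) (hα_mono : StrictMono α) (hα0 : α 0 = 0)
    (q : ℝ → ℝ)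
    (hq_cont : ContinuousOn q (Set.Ici t₀))
    (hq_bdd : ∃ M : ℝ, ∀ t ∈ Set.Ici t₀, |q t| ≤ M)
    (hq_lim : Filter.Tendsto q Filter.atTop (nhds 0))
    (m : ℝ → ℝ)
    (hm : ∀ t ∈ Set.Ici t₀, HasDerivAt m (-α (m t) + q t) t) :
    (∃ M : ℝ, ∀ t ∈ Set.Ici t₀, |m t| ≤ M) ∧
    Filter.Tendsto m Filter.atTop (nhds 0) :=
  scalar_classK_perturbed_decay_general t₀ α hα_mono hα0 q hq_lim m hm
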